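/- Let a ∈ L¹_loc([0,∞); ℂ) and let P, P_* be the solutions of the Krein system with coefficient a. Then for every r ≥ 0 and every λ ∈ ℂ with Im(λ) ≥ 0 one has P_*(r, λ) ≠ 0; that is, P_*(r, ·) has no zeros in the closed upper half-plane. -/

import Mathlib

/-! The energy identity `|P_*(r,λ)|² - |P(r,λ)|² = 2 Im λ ∫₀ʳ |P(s,λ)|² ds` shows that for
`Im λ ≥ 0` a zero of `P_*(r,λ)` is also a zero of `P(r,λ)`. The Krein system is linear, so by a
backward Gronwall argument a solution vanishing at `r` vanishes on all of `[0, r]`, contradicting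
`P_*(0,λ) = 1`. Since `a` is only locally integrable, `P` and `P_*` are merely absolutely
continuous, and the product rule behind the energy identity comes from Fubini on the triangle
`{(s, t) | t ≤ s}`. -/

open MeasureTheory Filter

noncomputable section

/-- A Krein system with coefficient `a ∈ L¹_loc([0,∞); ℂ)`, in integral form:
`P` and `Ps` (= `P_*`) are locally absolutely continuous in `r` and satisfy
`∂P/∂r = iλP - conj(a)P_*`, `P(0,λ)=1` and `∂P_*/∂r = -aP`, `P_*(0,λ)=1`. -/
def IsKreinSystem (a : ℝ → ℂ) (P Ps : ℝ → ℂ → ℂ) : Prop :=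
  MeasureTheory.LocallyIntegrableOn a (Set.Ici 0) ∧
  (∀ z : ℂ, ContinuousOn (fun r => P r z) (Set.Ici 0)) ∧
  (∀ z : ℂ, ContinuousOn (fun r => Ps r z) (Set.Ici 0)) ∧
  ∀ z : ℂ, ∀ r : ℝ, 0 ≤ r →
    (P r z = 1 + ∫ s in (0:ℝ)..r,
        (Complex.I * z * P s z - (starRingEnd ℂ) (a s) * Ps s z)) ∧
    (Ps r z = 1 - ∫ s in (0:ℝ)..r, a s * P s z)

open Set intervalIntegral ComplexConjugate

section Primitives

variable {𝕜 : Type*} [RCLike 𝕜] {a b : ℝ}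

theorem IntervalIntegrable.conj {f : ℝ → 𝕜} {μ : Measure ℝ} (hf : IntervalIntegrable f μ a b) :
    IntervalIntegrable (fun x => conj (f x)) μ a b :=
  hf.mono_fun (RCLike.continuous_conj.comp_aestronglyMeasurable
    hf.aestronglyMeasurable_restrict_uIoc) (.of_forall fun x => (RCLike.norm_conj (f x)).le)

theorem IntervalIntegrable.re {f : ℝ → 𝕜} {μ : Measure ℝ} (hf : IntervalIntegrable f μ a b) :
    IntervalIntegrable (fun x => RCLike.re (f x)) μ a b :=
  ⟨hf.1.re, hf.2.re⟩

theorem sub_eq_integral_of_eq_add_integral {E : Type*} [NormedAddCommGroup E] [NormedSpace ℝ E]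
    {f F : ℝ → E} {x y : ℝ} (hF : IntervalIntegrable F volume a b)
    (hf : ∀ s ∈ Icc a b, f s = f a + ∫ t in a..s, F t) (hx : x ∈ Icc a b) (hy : y ∈ Icc a b) :
    f y - f x = ∫ t in x..y, F t := by
  rw [hf y hy, hf x hx, ← integral_interval_sub_left
    (hF.mono_set (uIcc_subset_uIcc_left (Icc_subset_uIcc hy)))
    (hF.mono_set (uIcc_subset_uIcc_left (Icc_subset_uIcc hx)))]
  abel

theorem integral_primitive_mul_swap {F G : ℝ → 𝕜} (hab : a ≤ b)
    (hF : IntervalIntegrable F volume a b) (hG : IntervalIntegrable G volume a b) :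
    ∫ s in a..b, (∫ t in a..s, F t) * G s = ∫ t in a..b, F t * ∫ s in t..b, G s := by
  set μ := volume.restrict (Ioc a b)
  have hint : Integrable (fun p : ℝ × ℝ => if p.2 ≤ p.1 then F p.2 * G p.1 else 0)
      (μ.prod μ) := by
    refine ((hG.1.mul_prod hF.1).indicator
      (measurableSet_le measurable_snd measurable_fst)).congr (.of_forall fun p => ?_)
    simp only [indicator_apply, mem_ofPred_eq]
    split_ifs <;> ring
  rw [integral_of_le hab, integral_of_le hab]
  calc ∫ s in Ioc a b, (∫ t in a..s, F t) * G s
      = ∫ s, ∫ t, (if t ≤ s then F t * G s else 0) ∂μ ∂μ := by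
        refine setIntegral_congr_fun measurableSet_Ioc fun s hs => ?_
        have hIoc : Ioc a b ∩ Iic s = Ioc a s := by rw [Ioc_inter_Iic, min_eq_right hs.2]
        rw [integral_of_le hs.1.le, ← MeasureTheory.integral_mul_const, ← hIoc,
          ← setIntegral_indicator measurableSet_Iic]
        simp only [indicator_apply, mem_Iic, μ]
    _ = ∫ t, ∫ s, (if t ≤ s then F t * G s else 0) ∂μ ∂μ := integral_integral_swap hint
    _ = ∫ t in Ioc a b, F t * ∫ s in t..b, G s := by
        refine setIntegral_congr_fun measurableSet_Ioc fun t ht => ?_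
        have hIcc : Ioc a b ∩ Ici t = Icc t b := by
          ext s
          exact ⟨fun h => ⟨h.2, h.1.2⟩, fun h => ⟨⟨ht.1.trans_le h.1, h.2⟩, h.1⟩⟩
        rw [integral_of_le ht.2, ← integral_Icc_eq_integral_Ioc (x := t),
          ← MeasureTheory.integral_const_mul, ← hIcc, ← setIntegral_indicator measurableSet_Ici]
        simp only [indicator_apply, mem_Ici, μ]

theorem integral_deriv_mul_eq_sub_of_eq_add_integral {f g F G : ℝ → 𝕜} (hab : a ≤ b)
    (hF : IntervalIntegrable F volume a b) (hG : IntervalIntegrable G volume a b)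
    (hf : ∀ s ∈ Icc a b, f s = f a + ∫ t in a..s, F t)
    (hg : ∀ s ∈ Icc a b, g s = g a + ∫ t in a..s, G t) :
    ∫ s in a..b, (F s * g s + f s * G s) = f b * g b - f a * g a := by
  have hPF := continuousOn_primitive_interval' hF left_mem_uIcc
  have hPG := continuousOn_primitive_interval' hG left_mem_uIcc
  have hsplit : EqOn (fun s => F s * g s + f s * G s) (fun s => (g a * F s + f a * G s) +
      (F s * (∫ t in a..s, G t) + (∫ t in a..s, F t) * G s)) (uIcc a b) := by
    intro s hs
    rw [uIcc_of_le hab] at hs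
    simp only [hf s hs, hg s hs]
    ring
  have hsub : EqOn (fun t => F t * ∫ s in t..b, G s)
      (fun t => F t * (∫ s in a..b, G s) - F t * ∫ s in a..t, G s) (uIcc a b) := by
    intro t ht
    simp only [← integral_interval_sub_left hG (hG.mono_set (uIcc_subset_uIcc_left ht))]
    ring
  rw [integral_congr hsplit, integral_add ((hF.const_mul _).add (hG.const_mul _))
      ((hF.mul_continuousOn hPG).add (hG.continuousOn_mul hPF)),
    integral_add (hF.const_mul _) (hG.const_mul _),
    integral_add (hF.mul_continuousOn hPG) (hG.continuousOn_mul hPF),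
    integral_primitive_mul_swap hab hF hG, integral_congr hsub,
    integral_sub (hF.mul_const _) (hF.mul_continuousOn hPG), intervalIntegral.integral_const_mul,
    intervalIntegral.integral_const_mul, intervalIntegral.integral_mul_const,
    hf b ⟨hab, le_rfl⟩, hg b ⟨hab, le_rfl⟩]
  ring

theorem norm_sq_sub_norm_sq_eq_integral {f F : ℝ → 𝕜} (hab : a ≤ b)
    (hF : IntervalIntegrable F volume a b) (hf : ∀ s ∈ Icc a b, f s = f a + ∫ t in a..s, F t) :
    ‖f b‖ ^ 2 - ‖f a‖ ^ 2 = ∫ s in a..b, 2 * RCLike.re (F s * conj (f s)) := by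
  have h := integral_deriv_mul_eq_sub_of_eq_add_integral (g := fun s => conj (f s)) hab hF
    hF.conj hf fun s hs => by rw [hf s hs, map_add, intervalIntegral_conj]
  have hre : ∀ s, F s * conj (f s) + f s * conj (F s)
      = ((2 * RCLike.re (F s * conj (f s)) : ℝ) : 𝕜) := by
    intro s
    rw [show f s * conj (F s) = conj (F s * conj (f s)) by simp [mul_comm], RCLike.add_conj]
    push_cast
    ring
  simp only [hre, RCLike.intervalIntegral_ofReal, RCLike.mul_conj] at h
  exact_mod_cast h.symm

end Primitives

section Gronwall

variable {u g : ℝ → ℝ} {c b : ℝ}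

theorem IntervalIntegrable.exists_pos_forall_norm_integral_lt {E : Type*} [NormedAddCommGroup E]
    [NormedSpace ℝ E] {f : ℝ → E} (hf : IntervalIntegrable f volume c b) {ε : ℝ} (hε : 0 < ε) :
    ∃ δ > 0, ∀ x ∈ Icc c b, ∀ y ∈ Icc c b, dist x y < δ → ‖∫ t in x..y, f t‖ < ε := by
  have hcont := (continuousOn_primitive_interval' hf left_mem_uIcc).mono Icc_subset_uIcc
  obtain ⟨δ, hδ, hclose⟩ :=
    Metric.uniformContinuousOn_iff.1 (isCompact_Icc.uniformContinuousOn_of_continuous hcont) ε hε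
  refine ⟨δ, hδ, fun x hx y hy hxy => ?_⟩
  have hint : ∀ z ∈ Icc c b, IntervalIntegrable f volume c z := fun z hz =>
    hf.mono_set (uIcc_subset_uIcc_left (Icc_subset_uIcc hz))
  rw [← integral_interval_sub_left (hint y hy) (hint x hx), ← dist_eq_norm, dist_comm]
  exact hclose x hx y hy hxy

theorem nonpos_of_le_integral_mul_of_integral_lt_one (hu : ContinuousOn u (Icc c b))
    (hg : IntervalIntegrable g volume c b) (hg0 : 0 ≤ g) (hg1 : ∫ t in c..b, g t < 1)
    (hug : ∀ x ∈ Icc c b, u x ≤ ∫ t in x..b, g t * u t) : ∀ x ∈ Icc c b, u x ≤ 0 := by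
  intro x hx
  obtain ⟨x₀, hx₀, hmax⟩ := isCompact_Icc.exists_isMaxOn ⟨x, hx⟩ hu
  refine (hmax hx).trans (not_lt.1 fun hpos => lt_irrefl (u x₀) ?_)
  have hsub : uIcc x₀ b ⊆ Icc c b := by
    rw [uIcc_of_le hx₀.2]
    exact Icc_subset_Icc_left hx₀.1
  have hg₀ : IntervalIntegrable g volume x₀ b :=
    hg.mono_set (by rwa [uIcc_of_le (hx₀.1.trans hx₀.2)])
  calc u x₀ ≤ ∫ t in x₀..b, g t * u t := hug x₀ hx₀
    _ ≤ ∫ t in x₀..b, g t * u x₀ := by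
        refine integral_mono_on hx₀.2 (hg₀.mul_continuousOn (hu.mono hsub)) (hg₀.mul_const _)
          fun t ht => mul_le_mul_of_nonneg_left (hmax (hsub ?_)) (hg0 t)
        rwa [uIcc_of_le hx₀.2]
    _ = (∫ t in x₀..b, g t) * u x₀ := intervalIntegral.integral_mul_const _ _
    _ ≤ (∫ t in c..b, g t) * u x₀ := by
        gcongr
        exact integral_mono_interval hx₀.1 hx₀.2 le_rfl (ae_of_all _ hg0) hg
    _ < 1 * u x₀ := by gcongr
    _ = u x₀ := one_mul _

theorem le_integral_mul_of_nonpos_on_Icc {b' : ℝ} (hu : ContinuousOn u (Icc c b))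
    (hg : IntervalIntegrable g volume c b) (hg0 : 0 ≤ g)
    (hug : ∀ x ∈ Icc c b, u x ≤ ∫ t in x..b, g t * u t) (hb' : b' ∈ Icc c b)
    (htail : ∀ t ∈ Icc b' b, u t ≤ 0) : ∀ x ∈ Icc c b', u x ≤ ∫ t in x..b', g t * u t := by
  intro x hx
  have hx' : x ∈ Icc c b := ⟨hx.1, hx.2.trans hb'.2⟩
  have hgu : IntervalIntegrable (fun t => g t * u t) volume c b :=
    hg.mul_continuousOn (by rwa [uIcc_of_le (hx'.1.trans hx'.2)])
  have hrest : ∫ t in b'..b, g t * u t ≤ 0 := by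
    refine (integral_mono_on hb'.2 (hgu.mono_set ?_) intervalIntegrable_const fun t ht =>
      mul_nonpos_of_nonneg_of_nonpos (hg0 t) (htail t ht)).trans_eq integral_zero
    exact uIcc_subset_uIcc (Icc_subset_uIcc hb') right_mem_uIcc
  have := hug x hx'
  rw [← integral_add_adjacent_intervals (b := b')
    (hgu.mono_set (uIcc_subset_uIcc (Icc_subset_uIcc hx') (Icc_subset_uIcc hb')))
    (hgu.mono_set (uIcc_subset_uIcc (Icc_subset_uIcc hb') right_mem_uIcc))] at this
  linarith

theorem nonpos_of_le_integral_mul (hu : ContinuousOn u (Icc c b))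
    (hg : IntervalIntegrable g volume c b) (hg0 : 0 ≤ g)
    (hug : ∀ x ∈ Icc c b, u x ≤ ∫ t in x..b, g t * u t) : ∀ x ∈ Icc c b, u x ≤ 0 := by
  obtain ⟨δ, hδ, hsmall⟩ := hg.exists_pos_forall_norm_integral_lt one_pos
  have hstep : ∀ n : ℕ, ∀ x ∈ Icc c b, b - n * (δ / 2) ≤ x → u x ≤ 0 := by
    intro n
    induction n with
    | zero =>
      intro x hx hbx
      obtain rfl : x = b := le_antisymm hx.2 (by simpa using hbx)
      simpa using hug x hx
    | succ n ih =>
      intro x hx hbx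
      set b' := b - n * (δ / 2) with hb'_def
      rcases le_or_gt b' x with hb'x | hxb'
      · exact ih x hx hb'x
      have hb' : b' ∈ Icc c b := ⟨hx.1.trans hxb'.le, by nlinarith⟩
      have hsub : Icc x b' ⊆ Icc c b := Icc_subset_Icc hx.1 hb'.2
      have hsub' : uIcc x b' ⊆ uIcc c b := by
        rwa [uIcc_of_le hxb'.le, uIcc_of_le (hb'.1.trans hb'.2)]
      have hug' := le_integral_mul_of_nonpos_on_Icc hu hg hg0 hug hb' fun t ht =>
        ih t ⟨hb'.1.trans ht.1, ht.2⟩ ht.1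
      refine nonpos_of_le_integral_mul_of_integral_lt_one (hu.mono hsub) (hg.mono_set hsub') hg0
        ?_ (fun y hy => hug' y ⟨hx.1.trans hy.1, hy.2⟩) x ⟨le_rfl, hxb'.le⟩
      refine (le_abs_self _).trans_lt (hsmall x hx b' hb' ?_)
      rw [Real.dist_eq, abs_of_neg (sub_neg.2 hxb')]
      push_cast at hbx
      linarith
  intro x hx
  obtain ⟨n, hn⟩ := exists_nat_ge ((b - c) / (δ / 2))
  refine hstep n x hx ?_
  rw [div_le_iff₀ (by positivity)] at hn
  linarith [hx.1]

end Gronwall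

theorem krein_energy_density (z α p q : ℂ) :
    2 * (-(α * p) * conj q).re - 2 * ((Complex.I * z * p - conj α * q) * conj p).re
      = 2 * z.im * ‖p‖ ^ 2 := by
  rw [← Complex.normSq_eq_norm_sq, Complex.normSq_apply]
  simp only [Complex.mul_re, Complex.mul_im, Complex.conj_re, Complex.conj_im, Complex.I_re,
    Complex.I_im, Complex.neg_re, Complex.neg_im, Complex.sub_re, Complex.sub_im]
  ring

theorem krein_norm_deriv_le (a z p q : ℂ) :
    ‖Complex.I * z * p - conj a * q‖ + ‖-(a * p)‖ ≤ (‖z‖ + ‖a‖) * (‖p‖ + ‖q‖) := by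
  have := norm_sub_le (Complex.I * z * p) (conj a * q)
  simp only [norm_mul, norm_neg, Complex.norm_I, one_mul, Complex.norm_conj] at this ⊢
  nlinarith [norm_nonneg z, norm_nonneg a, norm_nonneg p, norm_nonneg q]

namespace IsKreinSystem

variable {a : ℝ → ℂ} {P Ps : ℝ → ℂ → ℂ} {r : ℝ}

theorem intervalIntegrable_coeff (hK : IsKreinSystem a P Ps) (hr : 0 ≤ r) :
    IntervalIntegrable a volume 0 r :=
  (intervalIntegrable_iff_integrableOn_Icc_of_le hr).2
    (hK.1.integrableOn_compact_subset (fun _ hx => hx.1) isCompact_Icc)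

theorem continuousOn_P (hK : IsKreinSystem a P Ps) (z : ℂ) (hr : 0 ≤ r) :
    ContinuousOn (fun s => P s z) (uIcc 0 r) :=
  (hK.2.1 z).mono (by rw [uIcc_of_le hr]; exact Icc_subset_Ici_self)

theorem continuousOn_Ps (hK : IsKreinSystem a P Ps) (z : ℂ) (hr : 0 ≤ r) :
    ContinuousOn (fun s => Ps s z) (uIcc 0 r) :=
  (hK.2.2.1 z).mono (by rw [uIcc_of_le hr]; exact Icc_subset_Ici_self)

theorem intervalIntegrable_deriv_P (hK : IsKreinSystem a P Ps) (z : ℂ) (hr : 0 ≤ r) :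
    IntervalIntegrable (fun s => Complex.I * z * P s z - conj (a s) * Ps s z) volume 0 r :=
  ((hK.continuousOn_P z hr).intervalIntegrable.const_mul _).sub
    ((hK.intervalIntegrable_coeff hr).conj.mul_continuousOn (hK.continuousOn_Ps z hr))

theorem intervalIntegrable_deriv_Ps (hK : IsKreinSystem a P Ps) (z : ℂ) (hr : 0 ≤ r) :
    IntervalIntegrable (fun s => -(a s * P s z)) volume 0 r :=
  ((hK.intervalIntegrable_coeff hr).mul_continuousOn (hK.continuousOn_P z hr)).neg

theorem P_zero (hK : IsKreinSystem a P Ps) (z : ℂ) : P 0 z = 1 := by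
  simpa using (hK.2.2.2 z 0 le_rfl).1

theorem Ps_zero (hK : IsKreinSystem a P Ps) (z : ℂ) : Ps 0 z = 1 := by
  simpa using (hK.2.2.2 z 0 le_rfl).2

theorem P_eq_add_integral (hK : IsKreinSystem a P Ps) (z : ℂ) (hr : 0 ≤ r) :
    P r z = P 0 z + ∫ s in 0..r, (Complex.I * z * P s z - conj (a s) * Ps s z) := by
  rw [hK.P_zero]
  exact (hK.2.2.2 z r hr).1

theorem Ps_eq_add_integral (hK : IsKreinSystem a P Ps) (z : ℂ) (hr : 0 ≤ r) :
    Ps r z = Ps 0 z + ∫ s in 0..r, -(a s * P s z) := by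
  rw [hK.Ps_zero, intervalIntegral.integral_neg, ← sub_eq_add_neg]
  exact (hK.2.2.2 z r hr).2

theorem norm_Ps_sq_sub_norm_P_sq (hK : IsKreinSystem a P Ps) (z : ℂ) (hr : 0 ≤ r) :
    ‖Ps r z‖ ^ 2 - ‖P r z‖ ^ 2 = 2 * z.im * ∫ s in 0..r, ‖P s z‖ ^ 2 := by
  have hP := (hK.intervalIntegrable_deriv_P z hr).mul_continuousOn
    (RCLike.continuous_conj.comp_continuousOn (hK.continuousOn_P z hr))
  have hPs := (hK.intervalIntegrable_deriv_Ps z hr).mul_continuousOn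
    (RCLike.continuous_conj.comp_continuousOn (hK.continuousOn_Ps z hr))
  calc ‖Ps r z‖ ^ 2 - ‖P r z‖ ^ 2
      = (‖Ps r z‖ ^ 2 - ‖Ps 0 z‖ ^ 2) - (‖P r z‖ ^ 2 - ‖P 0 z‖ ^ 2) := by
        rw [hK.P_zero, hK.Ps_zero]
        ring
    _ = (∫ s in 0..r, 2 * (-(a s * P s z) * conj (Ps s z)).re)
          - ∫ s in 0..r, 2 * ((Complex.I * z * P s z - conj (a s) * Ps s z) * conj (P s z)).re := by
        rw [norm_sq_sub_norm_sq_eq_integral hr (hK.intervalIntegrable_deriv_Ps z hr)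
            fun s hs => hK.Ps_eq_add_integral z hs.1,
          norm_sq_sub_norm_sq_eq_integral hr (hK.intervalIntegrable_deriv_P z hr)
            fun s hs => hK.P_eq_add_integral z hs.1]
        rfl
    _ = ∫ s in 0..r, 2 * z.im * ‖P s z‖ ^ 2 :=
        (integral_sub (hPs.re.const_mul 2) (hP.re.const_mul 2)).symm.trans
          (integral_congr fun s _ => krein_energy_density z (a s) (P s z) (Ps s z))
    _ = 2 * z.im * ∫ s in 0..r, ‖P s z‖ ^ 2 := intervalIntegral.integral_const_mul _ _

theorem norm_P_le_norm_Ps (hK : IsKreinSystem a P Ps) {z : ℂ} (hz : 0 ≤ z.im) (hr : 0 ≤ r) :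
    ‖P r z‖ ≤ ‖Ps r z‖ := by
  have henergy := hK.norm_Ps_sq_sub_norm_P_sq z hr
  have hint : 0 ≤ ∫ s in (0 : ℝ)..r, ‖P s z‖ ^ 2 := integral_nonneg hr fun s _ => sq_nonneg _
  have hsq : ‖P r z‖ ^ 2 ≤ ‖Ps r z‖ ^ 2 := by nlinarith
  exact (pow_le_pow_iff_left₀ (norm_nonneg _) (norm_nonneg _) two_ne_zero).1 hsq

theorem eqOn_zero_of_eq_zero (hK : IsKreinSystem a P Ps) {z : ℂ} (hr : 0 ≤ r)
    (hP : P r z = 0) (hPs : Ps r z = 0) : ∀ x ∈ Icc 0 r, P x z = 0 ∧ Ps x z = 0 := by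
  set u := fun s => ‖P s z‖ + ‖Ps s z‖
  set g := fun s => ‖z‖ + ‖a s‖
  have hu : ContinuousOn u (uIcc 0 r) :=
    (hK.continuousOn_P z hr).norm.add (hK.continuousOn_Ps z hr).norm
  have hg : IntervalIntegrable g volume 0 r :=
    intervalIntegrable_const.add (hK.intervalIntegrable_coeff hr).norm
  have hF := hK.intervalIntegrable_deriv_P z hr
  have hG := hK.intervalIntegrable_deriv_Ps z hr
  have hug : ∀ x ∈ Icc 0 r, u x ≤ ∫ t in x..r, g t * u t := by
    intro x hx
    have hsub : uIcc x r ⊆ uIcc 0 r := uIcc_subset_uIcc_right (Icc_subset_uIcc hx)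
    have hPx := sub_eq_integral_of_eq_add_integral hF
      (fun s hs => hK.P_eq_add_integral z hs.1) hx ⟨hr, le_rfl⟩
    have hPsx := sub_eq_integral_of_eq_add_integral hG
      (fun s hs => hK.Ps_eq_add_integral z hs.1) hx ⟨hr, le_rfl⟩
    rw [hP, zero_sub] at hPx
    rw [hPs, zero_sub] at hPsx
    have hF' := (hF.mono_set hsub).norm
    have hG' := (hG.mono_set hsub).norm
    calc u x = ‖∫ t in x..r, (Complex.I * z * P t z - conj (a t) * Ps t z)‖
          + ‖∫ t in x..r, -(a t * P t z)‖ := by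
          simp only [u, ← hPx, ← hPsx, norm_neg]
      _ ≤ (∫ t in x..r, ‖Complex.I * z * P t z - conj (a t) * Ps t z‖)
          + ∫ t in x..r, ‖-(a t * P t z)‖ :=
          add_le_add (norm_integral_le_integral_norm hx.2) (norm_integral_le_integral_norm hx.2)
      _ = ∫ t in x..r, (‖Complex.I * z * P t z - conj (a t) * Ps t z‖ + ‖-(a t * P t z)‖) :=
          (integral_add hF' hG').symm
      _ ≤ ∫ t in x..r, g t * u t :=
          integral_mono_on hx.2 (hF'.add hG') ((hg.mono_set hsub).mul_continuousOn (hu.mono hsub))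
            fun t _ => krein_norm_deriv_le (a t) z (P t z) (Ps t z)
  intro x hx
  have h := nonpos_of_le_integral_mul (by rwa [uIcc_of_le hr] at hu) hg (fun s => by positivity)
    hug x hx
  exact ⟨norm_le_zero_iff.1 (by linarith [norm_nonneg (Ps x z)]),
    norm_le_zero_iff.1 (by linarith [norm_nonneg (P x z)])⟩

end IsKreinSystem

/-- `P_*(r, ·)` has no zeros in the closed upper half-plane. -/
theorem krein_Pstar_ne_zero
    (a : ℝ → ℂ) (P Ps : ℝ → ℂ → ℂ)
    (hK : IsKreinSystem a P Ps) :
    ∀ r : ℝ, 0 ≤ r → ∀ lam : ℂ, 0 ≤ lam.im → Ps r lam ≠ 0 := by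
  intro r hr lam hlam hPs
  have hP : P r lam = 0 := by
    simpa [hPs] using hK.norm_P_le_norm_Ps hlam hr
  simpa [hK.Ps_zero] using (hK.eqOn_zero_of_eq_zero hr hP hPs 0 ⟨le_rfl, hr⟩).2
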